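/- arXiv:2510.07750 — 2 statements merged into one kernel-verified Lean document; each statement's English description precedes it below -/
import Mathlib

section
/- Define f : {-1,1} × [-1,1] → ℝ by f(y,z) = (z-y)² for z ∈ [0,1] and f(y,z) = (z-y)² + 1/4 for z ∈ [-1,0). Let Y take value +1 with probability 0.9 and -1 with probability 0.1. Then E[f(Y, -1)] = 3.85 > E[f(Y, 0)] = 1, where -1 is the robust minimizer of max_{y ∈ {-1}} f(y,z) and 0 is the robust minimizer of max_{y ∈ {-1,+1}} f(y,z); hence majorant consistency fails for the nested uncertainty sets C₁ = {-1} ⊆ C₂ = {-1,+1}. -/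
/-!
The cost is the squared error `(z - y) ^ 2`, plus a penalty `1 / 4` for negative decisions.
Against the single scenario `y = -1` the penalty is cheaper than the error `(z + 1) ^ 2 ≥ 1` of any
nonnegative decision, so `z = -1` is optimal; against both scenarios a negative decision pays at
least `1 + 1 / 4` in scenario `y = 1`, so `z = 0`, with worst-case cost `1`, is optimal. Under the
distribution `P(Y = 1) = 0.9` the first decision is far worse on average.
-/

section PenalizedSquare

variable {f : ℝ → ℝ → ℝ}
  (hf : ∀ y z, f y z = if 0 ≤ z then (z - y) ^ 2 else (z - y) ^ 2 + 1 / 4)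
include hf

theorem penalizedSquare_of_nonneg {y z : ℝ} (hz : 0 ≤ z) : f y z = (z - y) ^ 2 := by
  rw [hf, if_pos hz]

theorem penalizedSquare_of_neg {y z : ℝ} (hz : z < 0) : f y z = (z - y) ^ 2 + 1 / 4 := by
  rw [hf, if_neg hz.not_ge]

theorem penalizedSquare_neg_one_le (z : ℝ) : f (-1) (-1) ≤ f (-1) z := by
  rw [penalizedSquare_of_neg hf (by norm_num : (-1 : ℝ) < 0)]
  rcases le_or_gt 0 z with hz | hz
  · rw [penalizedSquare_of_nonneg hf hz]
    nlinarith
  · rw [penalizedSquare_of_neg hf hz]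
    nlinarith [sq_nonneg (z + 1)]

theorem max_penalizedSquare_zero_le (z : ℝ) :
    max (f (-1) 0) (f 1 0) ≤ max (f (-1) z) (f 1 z) := by
  have value_at_zero : max (f (-1) 0) (f 1 0) = 1 := by
    rw [penalizedSquare_of_nonneg hf le_rfl, penalizedSquare_of_nonneg hf le_rfl]
    norm_num
  rw [value_at_zero]
  rcases le_or_gt 0 z with hz | hz
  · refine le_max_of_le_left ?_
    rw [penalizedSquare_of_nonneg hf hz]
    nlinarith
  · refine le_max_of_le_right ?_
    rw [penalizedSquare_of_neg hf hz]
    nlinarith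

end PenalizedSquare

theorem stmt_13 (f : ℝ → ℝ → ℝ)
    (hf : ∀ y z, f y z = if 0 ≤ z then (z - y) ^ 2 else (z - y) ^ 2 + 1 / 4) :
    IsMinOn (fun z => f (-1) z) (Set.Icc (-1) 1) (-1) ∧
    IsMinOn (fun z => max (f (-1) z) (f 1 z)) (Set.Icc (-1) 1) 0 ∧
    0.9 * f 1 (-1) + 0.1 * f (-1) (-1) = 3.85 ∧
    0.9 * f 1 0 + 0.1 * f (-1) 0 = 1 ∧
    (3.85 : ℝ) > 1 := by
  refine ⟨fun z _ => penalizedSquare_neg_one_le hf z,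
    fun z _ => max_penalizedSquare_zero_le hf z, ?_, ?_, by norm_num⟩
  · rw [hf, hf]; norm_num
  · rw [hf, hf]; norm_num
end

section
/- With f and Y as in the counterexample (f(y,z) = (z-y)² plus a penalty 1/4 when z < 0; P[Y=1]=0.9), the oracle costs are min_{z∈[-1,1]} f(1,z) = 0 (at z=1) and min_{z∈[-1,1]} f(-1,z) = 1/4 (at z=-1). The expected regrets of the robust decisions are α_R(λ₁) = E[f(Y,-1) - min_z f(Y,z)] = 3.6 + 0.9·0.25 = 3.825 and α_R(λ₂) = E[f(Y,0) - min_z f(Y,z)] = 0.9 + 0.1·0.75 = 0.975, so α_R(λ₁) > α_R(λ₂): expected regret is not monotone increasing in the uncertainty-set size. -/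
/-!
Both minimisers are read off from the penalty: for `y ≥ 0` the loss vanishes at `z = y` and is
nonnegative, while for `y ≤ -1/2` moving to `z ≥ 0` costs at least `(z - y)² ≥ 1/4`, the penalty
paid at `z = y`. The regrets are then finite arithmetic.
-/

open Set

noncomputable section

def penalizedSqLoss (y z : ℝ) : ℝ :=
  if 0 ≤ z then (z - y) ^ 2 else (z - y) ^ 2 + 1 / 4

theorem penalizedSqLoss_nonneg (y z : ℝ) : 0 ≤ penalizedSqLoss y z := by
  unfold penalizedSqLoss
  split_ifs <;> positivity

theorem penalizedSqLoss_self_of_nonneg {y : ℝ} (hy : 0 ≤ y) : penalizedSqLoss y y = 0 := by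
  simp [penalizedSqLoss, hy]

theorem penalizedSqLoss_self_of_neg {y : ℝ} (hy : y < 0) : penalizedSqLoss y y = 1 / 4 := by
  simp [penalizedSqLoss, hy.not_ge]

theorem isMinOn_penalizedSqLoss_of_nonneg {y : ℝ} (hy : 0 ≤ y) :
    IsMinOn (penalizedSqLoss y) univ y := fun z _ => by
  simpa [penalizedSqLoss_self_of_nonneg hy] using penalizedSqLoss_nonneg y z

theorem isMinOn_penalizedSqLoss_of_le {y : ℝ} (hy : y ≤ -1 / 2) :
    IsMinOn (penalizedSqLoss y) univ y := fun z _ => by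
  show penalizedSqLoss y y ≤ penalizedSqLoss y z
  rw [penalizedSqLoss_self_of_neg (by linarith), penalizedSqLoss]
  split_ifs with hz
  · nlinarith
  · nlinarith [sq_nonneg (z - y)]

end

theorem stmt_14 (f : ℝ → ℝ → ℝ)
    (hf : ∀ y z, f y z = if 0 ≤ z then (z - y) ^ 2 else (z - y) ^ 2 + 1 / 4) :
    IsMinOn (f 1) (Set.Icc (-1) 1) 1 ∧ f 1 1 = 0 ∧
    IsMinOn (f (-1)) (Set.Icc (-1) 1) (-1) ∧ f (-1) (-1) = 1 / 4 ∧
    0.9 * (f 1 (-1) - 0) + 0.1 * (f (-1) (-1) - 1 / 4) = 3.825 ∧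
    0.9 * (f 1 0 - 0) + 0.1 * (f (-1) 0 - 1 / 4) = 0.975 ∧
    (3.825 : ℝ) > 0.975 := by
  obtain rfl : f = penalizedSqLoss := funext₂ hf
  refine ⟨(isMinOn_penalizedSqLoss_of_nonneg zero_le_one).on_subset (subset_univ _),
    penalizedSqLoss_self_of_nonneg zero_le_one,
    (isMinOn_penalizedSqLoss_of_le (by norm_num)).on_subset (subset_univ _),
    penalizedSqLoss_self_of_neg (by norm_num), ?_, ?_, by norm_num⟩ <;>
  norm_num [penalizedSqLoss]
end
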